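/- arXiv:1701.06631 — 2 statements merged into one kernel-verified Lean document; each statement's English description precedes it below -/
import Mathlib

section
/- (Theorem 1, map-phase part.) Let K, q, t, m, r, T be positive integers with q ≤ K, t ≤ K, Km = qr, T dividing m, and T·C(K,t) dividing r, and set b = C(K,t). Then there exists a b×T matrix P of nonnegative integers (namely the balanced assignment with every entry equal to r/(bT)) such that: (i) every row of P sums to r/b (the batch size); (ii) every column of P sums to r/T (the number of coded rows per partition); and (iii) for every q-element subset G of the K servers, the total number of coded rows of each partition contained in batches stored by some server of G is at least m/T. Consequently, under this assignment any q servers collectively store enough rows of every partition to decode it, so the set of servers needed to terminate the map phase is the same as for the unpartitioned MDS scheme. -/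
/-!
Take the balanced assignment, every entry equal to `c = r / (T * C(K, t))`. The row and column
sums are then immediate, and for a set `G` of `q` servers the partition count in (iii) is `c`
times the number of `t`-subsets meeting `G`, namely `C(K, t) - C(K - q, t)`. Since
`s ↦ C(s, t) / s` is nondecreasing, `C(K - q, t) ≤ (1 - q / K) C(K, t)`: the servers of `G` store
at least a `q / K` fraction of all batches, i.e. at least `(q / K) r / T = m / T` coded rows of
each partition.
-/

open Finset

namespace Nat

theorem mul_div_mul_eq_div_of_mul_dvd {a b c : ℕ} (h : a * b ∣ c) :
    a * (c / (a * b)) = c / b := by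
  rw [mul_comm a b, ← Nat.div_div_eq_div_mul,
    Nat.mul_div_cancel' (Nat.dvd_div_of_mul_dvd (mul_comm a b ▸ h))]

theorem mul_choose_le_mul_choose {s n t : ℕ} (ht : 0 < t) (hsn : s ≤ n) :
    n * s.choose t ≤ s * n.choose t := by
  obtain ⟨u, rfl⟩ := Nat.exists_eq_add_one_of_ne_zero ht.ne'
  obtain _ | s := s
  · simp
  obtain _ | n := n
  · omega
  refine Nat.le_of_mul_le_mul_right ?_ u.succ_pos
  calc (n + 1) * (s + 1).choose (u + 1) * (u + 1)
      = (n + 1) * ((s + 1) * s.choose u) := by rw [add_one_mul_choose_eq, mul_assoc]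
    _ ≤ (s + 1) * ((n + 1) * n.choose u) := by
      rw [mul_left_comm]
      gcongr
      omega
    _ = (s + 1) * (n + 1).choose (u + 1) * (u + 1) := by rw [add_one_mul_choose_eq, mul_assoc]

end Nat

variable {α : Type*} [DecidableEq α]

theorem card_powersetCard_filter_inter_nonempty (s G : Finset α) (t : ℕ) :
    #{A ∈ powersetCard t s | (A ∩ G).Nonempty} = (#s).choose t - (#(s \ G)).choose t := by
  have hdisjoint : {A ∈ powersetCard t s | ¬(A ∩ G).Nonempty} = powersetCard t (s \ G) := by
    ext A
    simp only [mem_filter, mem_powersetCard, not_nonempty_iff_eq_empty,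
      ← disjoint_iff_inter_eq_empty, subset_sdiff]
    tauto
  have hsplit := card_filter_add_card_filter_not (s := powersetCard t s)
    (fun A => (A ∩ G).Nonempty)
  rw [hdisjoint, card_powersetCard, card_powersetCard] at hsplit
  omega

theorem card_mul_choose_le_card_mul_card_filter_inter_nonempty {s G : Finset α} (hG : G ⊆ s)
    {t : ℕ} (ht : 0 < t) :
    #G * (#s).choose t ≤ #s * #{A ∈ powersetCard t s | (A ∩ G).Nonempty} := by
  rw [card_powersetCard_filter_inter_nonempty, card_sdiff_of_subset hG, Nat.mul_sub]
  have hratio := Nat.mul_choose_le_mul_choose (n := #s) ht (Nat.sub_le (#s) (#G))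
  have hsum : (#s - #G) * (#s).choose t + #G * (#s).choose t = #s * (#s).choose t := by
    rw [← add_mul, Nat.sub_add_cancel (card_le_card hG)]
  omega

theorem block_diagonal_map_phase_assignment_exists_general
    (K q t m r T : ℕ) (hK : 0 < K) (ht0 : 0 < t)
    (hqr : K * m = q * r) (hdvd : T * Nat.choose K t ∣ r) :
    ∃ P : Finset (Fin K) → Fin T → ℕ,
      (∀ A ∈ Finset.powersetCard t (Finset.univ : Finset (Fin K)),
        ∑ j : Fin T, P A j = r / Nat.choose K t) ∧
      (∀ j : Fin T,
        ∑ A ∈ Finset.powersetCard t (Finset.univ : Finset (Fin K)), P A j = r / T) ∧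
      (∀ G : Finset (Fin K), G.card = q → ∀ j : Fin T,
        m / T ≤
          ∑ A ∈ (Finset.powersetCard t (Finset.univ : Finset (Fin K))).filter
              (fun A => (A ∩ G).Nonempty), P A j) := by
  set c := r / (T * K.choose t) with hc
  refine ⟨fun _ _ => c, fun A _ => ?_, fun j => ?_, fun G hG j => ?_⟩
  · rw [sum_const, card_univ, Fintype.card_fin, smul_eq_mul,
      Nat.mul_div_mul_eq_div_of_mul_dvd hdvd]
  · rw [sum_const, card_powersetCard, card_univ, Fintype.card_fin, smul_eq_mul, hc, mul_comm T,
      Nat.mul_div_mul_eq_div_of_mul_dvd (mul_comm T _ ▸ hdvd)]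
  · set N := #{A ∈ powersetCard t (univ : Finset (Fin K)) | (A ∩ G).Nonempty}
    have hcover : q * K.choose t ≤ K * N := by
      simpa [hG] using card_mul_choose_le_card_mul_card_filter_inter_nonempty (subset_univ G) ht0
    have hr : r = T * K.choose t * c := (Nat.mul_div_cancel' hdvd).symm
    rw [sum_const, smul_eq_mul]
    refine Nat.div_le_of_le_mul (Nat.le_of_mul_le_mul_left ?_ hK)
    calc K * m = q * K.choose t * (T * c) := by rw [hqr, hr]; ring
      _ ≤ K * N * (T * c) := Nat.mul_le_mul_right _ hcover
      _ = K * (T * (N * c)) := by ring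

/-- Theorem 1 (map-phase part). Let `K, q, t, m, r, T` be positive integers with `q ≤ K`,
`t ≤ K`, `K * m = q * r`, `T ∣ m` and `T * C(K, t) ∣ r`, and set `b = C(K, t)`.
Batches are labeled by the `t`-element subsets of the `K` servers, and a batch is stored by a
server set `G` iff its label intersects `G`. Then there exists an assignment matrix `P`
(indexed by batch labels and partitions `Fin T`) of coded rows to batches such that:
(i) every row of `P` sums to the batch size `r / b`;
(ii) every column of `P` sums to the number `r / T` of coded rows per partition;
(iii) for every `q`-element subset `G` of the servers and every partition, the batches whose
label intersects `G` collectively contain at least `m / T` coded rows of that partition,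
i.e. any `q` servers store enough rows of every partition to decode it. -/
theorem block_diagonal_map_phase_assignment_exists
    (K q t m r T : ℕ) (hK : 0 < K) (hq0 : 0 < q) (ht0 : 0 < t) (hm : 0 < m)
    (hr : 0 < r) (hT : 0 < T) (hq : q ≤ K) (ht : t ≤ K)
    (hqr : K * m = q * r) (hTm : T ∣ m) (hdvd : T * Nat.choose K t ∣ r) :
    ∃ P : Finset (Fin K) → Fin T → ℕ,
      (∀ A ∈ Finset.powersetCard t (Finset.univ : Finset (Fin K)),
        ∑ j : Fin T, P A j = r / Nat.choose K t) ∧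
      (∀ j : Fin T,
        ∑ A ∈ Finset.powersetCard t (Finset.univ : Finset (Fin K)), P A j = r / T) ∧
      (∀ G : Finset (Fin K), G.card = q → ∀ j : Fin T,
        m / T ≤
          ∑ A ∈ (Finset.powersetCard t (Finset.univ : Finset (Fin K))).filter
              (fun A => (A ∩ G).Nonempty), P A j) :=
  block_diagonal_map_phase_assignment_exists_general K q t m r T hK ht0 hqr hdvd
end

section
/- (Correctness of the heuristic assignment solver.) Let r, T, b be positive integers with T dividing r and b dividing r. Set γ = ⌊r/(bT)⌋ and d = r/b − γT. Define the b×T matrix P = [p_{i,j}] by p_{i,j} = γ + |{a ∈ {0, 1, …, d·b − 1} : ⌊a/d⌋ = i−1 and (a mod T) = j−1}| (when d > 0; P has all entries γ when d = 0). Then every row of P sums to r/b and every column of P sums to r/T, i.e., P is a valid assignment matrix. -/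
/-!
Write `r / b = γ * T + d`, so `d = (r / b) % T`. The increments indexed by `a < d * b` hit row
`a / d`, and each row is hit by exactly one block of `d` consecutive values of `a`; they hit
column `a % T`, and since `T ∣ r = b * γ * T + d * b` we have `T ∣ d * b`, so each column is hit
exactly `d * b / T` times.
-/

open Finset

theorem card_filter_range_mul_div_eq {d b i : ℕ} (hi : i < b) :
    #{a ∈ range (d * b) | a / d = i} = d := by
  rcases Nat.eq_zero_or_pos d with rfl | hd
  · simp
  have hblock : {a ∈ range (d * b) | a / d = i} = Ico (i * d) (i * d + d) := by
    have hend : i * d + d ≤ d * b := by nlinarith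
    ext a
    simp only [mem_filter, mem_range, mem_Ico, Nat.div_eq_iff hd]
    omega
  simp [hblock]

theorem card_filter_range_mod_eq {n T j : ℕ} (hT : 0 < T) (hTn : T ∣ n) (hj : j < T) :
    #{a ∈ range n | a % T = j} = n / T := by
  simpa [Nat.count_eq_card_filter_range, Nat.ModEq, Nat.mod_eq_of_lt hj,
    Nat.mod_eq_zero_of_dvd hTn] using Nat.count_modEq_card n hT j

theorem sum_fin_card_filter_and_eq {n : ℕ} {s : Finset ℕ} {p : ℕ → Prop} [DecidablePred p]
    {f : ℕ → ℕ} (hf : ∀ a ∈ s, p a → f a < n) :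
    ∑ k : Fin n, #{a ∈ s | p a ∧ f a = k} = #{a ∈ s | p a} := by
  rw [Fin.sum_univ_eq_sum_range (fun k => #{a ∈ s | p a ∧ f a = k}),
    card_eq_sum_card_fiberwise (f := f) (t := range n)]
  · simp only [filter_filter]
  · intro a ha
    obtain ⟨has, hpa⟩ := mem_filter.1 (mem_coe.1 ha)
    exact mem_range.2 (hf a has hpa)

theorem heuristic_solver_valid_assignment_general (r T b : ℕ)
    (hT : 0 < T) (hTr : T ∣ r) (hbr : b ∣ r) :
    ∀ γ d : ℕ, γ = r / (b * T) → d = r / b - γ * T →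
    ∀ P : Fin b → Fin T → ℕ,
      (∀ i j, P i j =
        γ + ((Finset.range (d * b)).filter
              (fun a => a / d = (i : ℕ) ∧ a % T = (j : ℕ))).card) →
      ((∀ i, ∑ j : Fin T, P i j = r / b) ∧ (∀ j, ∑ i : Fin b, P i j = r / T)) := by
  rintro γ d hγ hd P hP
  have hγd : γ * T + d = r / b := by
    rw [hd, hγ, ← Nat.div_div_eq_div_mul]
    exact Nat.add_sub_of_le (Nat.div_mul_le_self _ _)
  have hr : r = b * γ * T + d * b := by
    calc r = b * (r / b) := (Nat.mul_div_cancel' hbr).symm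
      _ = b * γ * T + d * b := by rw [← hγd]; ring
  have hTdb : T ∣ d * b := (Nat.dvd_add_right (dvd_mul_left T (b * γ))).1 (hr ▸ hTr)
  simp only [hP, sum_add_distrib, sum_const, card_univ, Fintype.card_fin, smul_eq_mul]
  constructor
  · intro i
    rw [sum_fin_card_filter_and_eq (fun a _ _ => Nat.mod_lt a hT),
      card_filter_range_mul_div_eq i.isLt, ← hγd, mul_comm]
  · intro j
    have hrow : ∀ a ∈ range (d * b), a % T = j → a / d < b := fun a ha _ =>
      Nat.div_lt_of_lt_mul (mem_range.1 ha)
    simp only [and_comm (a := _ / d = _)]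
    rw [sum_fin_card_filter_and_eq hrow, card_filter_range_mod_eq hT hTdb j.isLt, hr,
      Nat.add_div_of_dvd_left hTdb, Nat.mul_div_cancel _ hT]

/-- Correctness of the heuristic assignment solver. Let `r, T, b` be positive integers with
`T ∣ r` and `b ∣ r`. Set `γ = ⌊r / (b * T)⌋` and `d = r / b - γ * T`. The heuristic solver
first sets every entry of the `b × T` matrix `P` to `γ` and then, for each
`a ∈ {0, …, d * b - 1}`, increments the entry in row `⌊a / d⌋` and column `a % T`
(rows and columns indexed from `0` here). The resulting matrix `P` is a valid assignment
matrix: every row sums to the batch size `r / b` and every column sums to the number of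
coded rows per partition `r / T`. (When `d = 0` no increments occur and `P` is constant `γ`.) -/
theorem heuristic_solver_valid_assignment (r T b : ℕ)
    (hr : 0 < r) (hT : 0 < T) (hb : 0 < b) (hTr : T ∣ r) (hbr : b ∣ r) :
    ∀ γ d : ℕ, γ = r / (b * T) → d = r / b - γ * T →
    ∀ P : Fin b → Fin T → ℕ,
      (∀ i j, P i j =
        γ + ((Finset.range (d * b)).filter
              (fun a => a / d = (i : ℕ) ∧ a % T = (j : ℕ))).card) →
      ((∀ i, ∑ j : Fin T, P i j = r / b) ∧ (∀ j, ∑ i : Fin b, P i j = r / T)) :=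
  heuristic_solver_valid_assignment_general r T b hT hTr hbr
end
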